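/- Let J̃ = Φ⊗r* be the fixed point of Π_M T. Then ||J̃ − J*||_∞ ≤ (1/(1−α)) ||Π_M J* − J*||_∞. -/

import Mathlib

/-- (Φ⊗r)(i) = min_j (φ_j(i) + r(j)) : min-plus linear combination. -/
noncomputable def minplusComb {n k : ℕ} (φ : Fin k → Fin n → ℝ) (r : Fin k → ℝ) :
    Fin n → ℝ := fun i => ⨅ j, (φ j i + r j)

/-- r^u(j) = −min_i (φ_j(i) − u(i)). -/
noncomputable def minplusCoeff {n k : ℕ} (φ : Fin k → Fin n → ℝ) (u : Fin n → ℝ) :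
    Fin k → ℝ := fun j => -(⨅ i, (φ j i - u i))

/-- Π_M u = Φ ⊗ r^u : the min-plus projection onto the span of φ₁,…,φ_k. -/
noncomputable def minplusProj {n k : ℕ} (φ : Fin k → Fin n → ℝ) (u : Fin n → ℝ) :
    Fin n → ℝ := minplusComb φ (minplusCoeff φ u)

/-!
`Π_M` is sup-norm nonexpansive (it is built from finite infima of translates) and `T` is an
`α`-contraction, so `Π_M ∘ T` is an `α`-contraction with fixed point `J̃`. The a priori estimate
`dist x y ≤ dist x (f x) / (1 - α)` for a contraction `f` with fixed point `y`, taken at `x = J*`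
where `Π_M (T J*) = Π_M J*`, is the claimed bound.
-/

open scoped NNReal

section Lipschitz

variable {X ι : Type*}

theorem lipschitzWith_pi [PseudoEMetricSpace X] [Fintype ι] {Y : ι → Type*}
    [∀ i, PseudoEMetricSpace (Y i)] {K : ℝ≥0} {f : X → ∀ i, Y i}
    (hf : ∀ i, LipschitzWith K fun x => f x i) : LipschitzWith K f :=
  fun x y => edist_pi_le_iff.mpr fun i => hf i x y

variable [PseudoMetricSpace X] [Finite ι] {K : ℝ≥0} {f : ι → X → ℝ}

theorem LipschitzWith.iInf (hf : ∀ i, LipschitzWith K (f i)) :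
    LipschitzWith K fun x => ⨅ i, f i x := by
  rcases isEmpty_or_nonempty ι with hι | hι
  · simpa only [Real.iInf_of_isEmpty] using (LipschitzWith.const (0 : ℝ)).weaken K.2
  refine LipschitzWith.of_le_add_mul K fun x y => ?_
  rw [← sub_le_iff_le_add]
  refine le_ciInf fun i => ?_
  rw [sub_le_iff_le_add]
  exact (ciInf_le (Finite.bddBelow_range _) i).trans ((hf i).le_add_mul x y)

theorem LipschitzWith.iSup (hf : ∀ i, LipschitzWith K (f i)) :
    LipschitzWith K fun x => ⨆ i, f i x := by
  rcases isEmpty_or_nonempty ι with hι | hι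
  · simpa only [Real.iSup_of_isEmpty] using (LipschitzWith.const (0 : ℝ)).weaken K.2
  refine LipschitzWith.of_le_add_mul K fun x y => ciSup_le fun i => ?_
  grw [(hf i).le_add_mul x y, le_ciSup (Finite.bddAbove_range fun i => f i y) i]

end Lipschitz

theorem lipschitzWith_one_sum_mul {ι : Type*} [Fintype ι] {w : ι → ℝ} (hw0 : ∀ i, 0 ≤ w i)
    (hw1 : ∑ i, w i = 1) : LipschitzWith 1 fun u : ι → ℝ => ∑ i, w i * u i := by
  refine LipschitzWith.of_le_add fun u v => ?_
  have hcoord : ∀ i, w i * u i ≤ w i * v i + w i * dist u v := fun i => by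
    have : u i - v i ≤ dist u v :=
      (le_abs_self _).trans ((Real.dist_eq _ _).symm.trans_le (dist_le_pi_dist u v i))
    nlinarith [hw0 i]
  calc ∑ i, w i * u i ≤ ∑ i, (w i * v i + w i * dist u v) := Finset.sum_le_sum fun i _ => hcoord i
    _ = ∑ i, w i * v i + dist u v := by rw [Finset.sum_add_distrib, ← Finset.sum_mul, hw1, one_mul]

section MinPlus

variable {n k : ℕ} (φ : Fin k → Fin n → ℝ)

theorem lipschitzWith_one_minplusCoeff : LipschitzWith 1 (minplusCoeff φ) :=
  lipschitzWith_pi fun j => lipschitzWith_neg_iff.mpr <| LipschitzWith.iInf fun i =>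
    LipschitzWith.of_dist_le_mul fun u v => by
      simpa only [dist_sub_left, NNReal.coe_one, one_mul] using dist_le_pi_dist u v i

theorem lipschitzWith_one_minplusComb : LipschitzWith 1 (minplusComb φ) :=
  lipschitzWith_pi fun i => LipschitzWith.iInf fun j =>
    LipschitzWith.of_dist_le_mul fun r s => by
      simpa only [dist_add_left, NNReal.coe_one, one_mul] using dist_le_pi_dist r s j

theorem lipschitzWith_one_minplusProj : LipschitzWith 1 (minplusProj φ) :=
  mul_one (1 : ℝ≥0) ▸ (lipschitzWith_one_minplusComb φ).comp (lipschitzWith_one_minplusCoeff φ)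

end MinPlus

noncomputable def bellmanOperator {S A : Type*} [Fintype S] (p : A → S → S → ℝ) (g : S → ℝ) (α : ℝ)
    (J : S → ℝ) : S → ℝ :=
  fun s => ⨆ a, (g s + α * ∑ s', p a s s' * J s')

theorem lipschitzWith_bellmanOperator {S A : Type*} [Fintype S] [Finite A] {p : A → S → S → ℝ}
    (hp : ∀ a s s', 0 ≤ p a s s') (hp1 : ∀ a s, ∑ s', p a s s' = 1) (g : S → ℝ) {α : ℝ}
    (hα : 0 ≤ α) : LipschitzWith (Real.toNNReal α) (bellmanOperator p g α) :=
  lipschitzWith_pi fun s => LipschitzWith.iSup fun a =>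
    LipschitzWith.of_le_add_mul _ fun J J' => by
      have hmean := (lipschitzWith_one_sum_mul (hp a s) (hp1 a s)).le_add_mul J J'
      rw [NNReal.coe_one, one_mul] at hmean
      rw [Real.coe_toNNReal _ hα]
      linarith [mul_le_mul_of_nonneg_left hmean hα]

theorem minplus_projected_bellman_error_general {n k : ℕ}
    {A : Type*} [Fintype A]
    (p : A → Fin n → Fin n → ℝ)
    (hp : ∀ a s s', 0 ≤ p a s s')
    (hp1 : ∀ a s, ∑ s', p a s s' = 1)
    (g : Fin n → ℝ) (α : ℝ) (hα0 : 0 < α) (hα1 : α < 1)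
    (T : (Fin n → ℝ) → (Fin n → ℝ))
    (hT : ∀ J s, T J s = ⨆ a : A, (g s + α * ∑ s', p a s s' * J s'))
    (φ : Fin k → Fin n → ℝ)
    (Jstar : Fin n → ℝ) (hfix : T Jstar = Jstar)
    (Jtilde : Fin n → ℝ) (hfixproj : minplusProj φ (T Jtilde) = Jtilde) :
    ‖Jtilde - Jstar‖ ≤ (1 / (1 - α)) * ‖minplusProj φ Jstar - Jstar‖ := by
  have hT_eq : T = bellmanOperator p g α := funext fun J => funext (hT J)
  have hcontr : ContractingWith (Real.toNNReal α) (minplusProj φ ∘ T) := by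
    refine ⟨Real.toNNReal_lt_one.mpr hα1, ?_⟩
    simpa only [one_mul, hT_eq] using
      (lipschitzWith_one_minplusProj φ).comp (lipschitzWith_bellmanOperator hp hp1 g hα0.le)
  have hbound := hcontr.dist_le_of_fixedPoint Jstar hfixproj
  rw [Function.comp_apply, hfix, Real.coe_toNNReal _ hα0.le] at hbound
  rw [one_div_mul_eq_div, ← dist_eq_norm, ← dist_eq_norm, dist_comm,
    dist_comm (minplusProj φ Jstar)]
  exact hbound

/-- Error bound for the fixed point of Π_M ∘ T:
‖J̃ − J*‖_∞ ≤ (1/(1−α)) ‖Π_M J* − J*‖_∞. -/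
theorem minplus_projected_bellman_error {n k : ℕ} [NeZero n] [NeZero k]
    {A : Type*} [Fintype A] [Nonempty A]
    (p : A → Fin n → Fin n → ℝ)
    (hp : ∀ a s s', 0 ≤ p a s s')
    (hp1 : ∀ a s, ∑ s', p a s s' = 1)
    (g : Fin n → ℝ) (α : ℝ) (hα0 : 0 < α) (hα1 : α < 1)
    (T : (Fin n → ℝ) → (Fin n → ℝ))
    (hT : ∀ J s, T J s = ⨆ a : A, (g s + α * ∑ s', p a s s' * J s'))
    (φ : Fin k → Fin n → ℝ)
    (Jstar : Fin n → ℝ) (hfix : T Jstar = Jstar)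
    (Jtilde : Fin n → ℝ) (hfixproj : minplusProj φ (T Jtilde) = Jtilde) :
    ‖Jtilde - Jstar‖ ≤ (1 / (1 - α)) * ‖minplusProj φ Jstar - Jstar‖ :=
  minplus_projected_bellman_error_general p hp hp1 g α hα0 hα1 T hT φ Jstar hfix Jtilde hfixproj
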